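/- Let E be a nonempty set (of environments), d ≥ 1, and β : E → ℝ^d. Define P = { j ∈ {1, …, d} : there exist e, h ∈ E with β^e_j ≠ β^h_j }. Let R ⊆ {1, …, d} and γ : E → ℝ^d with γ^e_j = 0 for every e ∈ E and every j ∉ R, and suppose there exist e, h ∈ E with γ^e ≠ γ^h. If there exist c ∈ ℝ, α, η ∈ ℝ^d and λ ∈ ℝ with λ ≠ 0 such that c·β^e + α = λ·γ^e + η holds in ℝ^d for every e ∈ E, then P ⊆ R. -/

import Mathlib

/-!
Subtracting the relation `c • β e + α = lam • γ e + η` at two environments removes the constants: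
`c • (β e - β h) = lam • (γ e - γ h)`. At a coordinate outside `R` the right side vanishes, so a
coordinate of `β` that varies there forces `c = 0`; then `lam • (γ e - γ h) = 0` with `lam ≠ 0`
makes `γ` invariant, contradicting the hypothesis that it varies.
-/

theorem smul_sub_eq_smul_sub_of_forall_add_eq {ι R M : Type*} [Ring R] [AddCommGroup M]
    [Module R M] {x y : ι → M} {c lam : R} {α η : M}
    (hrel : ∀ i, c • x i + α = lam • y i + η) (i k : ι) :
    c • (x i - x k) = lam • (y i - y k) := by
  calc c • (x i - x k) = (c • x i + α) - (c • x k + α) := by rw [smul_sub]; abel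
    _ = (lam • y i + η) - (lam • y k + η) := by rw [hrel i, hrel k]
    _ = lam • (y i - y k) := by rw [smul_sub]; abel

theorem parents_subset_R_general {E : Type*} {d : ℕ}
    (β : E → Fin d → ℝ)
    (P : Set (Fin d)) (hP : P = {j : Fin d | ∃ e h : E, β e j ≠ β h j})
    (R : Set (Fin d)) (γ : E → Fin d → ℝ)
    (hγR : ∀ (e : E) (j : Fin d), j ∉ R → γ e j = 0)
    (hγne : ∃ e h : E, γ e ≠ γ h)
    (himp : ∃ (c : ℝ) (α η : Fin d → ℝ) (lam : ℝ), lam ≠ 0 ∧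
      ∀ e : E, c • β e + α = lam • γ e + η) :
    P ⊆ R := by
  obtain ⟨c, α, η, lam, hlam, hrel⟩ := himp
  have hdiff := smul_sub_eq_smul_sub_of_forall_add_eq hrel
  obtain ⟨e₀, h₀, hγ⟩ := hγne
  subst hP
  rintro j ⟨e, h, hβ⟩
  by_contra hjR
  have hc : c = 0 := by
    have hj := congrFun (hdiff e h) j
    simp only [Pi.smul_apply, Pi.sub_apply, smul_eq_mul, hγR e j hjR, hγR h j hjR, sub_zero,
      mul_zero, mul_eq_zero, sub_eq_zero] at hj
    exact hj.resolve_right hβ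
  have hlamγ : lam • (γ e₀ - γ h₀) = 0 := by rw [← hdiff, hc, zero_smul]
  exact hγ (sub_eq_zero.mp ((smul_eq_zero.mp hlamγ).resolve_left hlam))

/-- Coefficient-level form of Theorem 1 (identifiability of causal parents): let
`P = {j : ∃ e h, β^e_j ≠ β^h_j}` be the set of coordinates with non-invariant
coefficients. If `γ^e` is supported on `R`, varies across environments, and
`c·β^e + α = λ·γ^e + η` holds for all `e` with `λ ≠ 0`, then `P ⊆ R`. -/
theorem parents_subset_R {E : Type*} [Nonempty E] {d : ℕ} (hd : 1 ≤ d)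
    (β : E → Fin d → ℝ)
    (P : Set (Fin d)) (hP : P = {j : Fin d | ∃ e h : E, β e j ≠ β h j})
    (R : Set (Fin d)) (γ : E → Fin d → ℝ)
    (hγR : ∀ (e : E) (j : Fin d), j ∉ R → γ e j = 0)
    (hγne : ∃ e h : E, γ e ≠ γ h)
    (himp : ∃ (c : ℝ) (α η : Fin d → ℝ) (lam : ℝ), lam ≠ 0 ∧
      ∀ e : E, c • β e + α = lam • γ e + η) :
    P ⊆ R :=
  parents_subset_R_general β P hP R γ hγR hγne himp
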